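/- arXiv:1205.3954 — 2 statements merged into one kernel-verified Lean document; each statement's English description precedes it below -/
import Mathlib

section
/- Let X = (X₁,...,X_d) have multivariate extreme value distribution with unit Fréchet margins F and tail dependence function l. Then for any λ ∈ (0,∞)^d, E[max_{1≤j≤d} F(X_j)^{λ_j}] = l(λ₁⁻¹,...,λ_d⁻¹) / (1 + l(λ₁⁻¹,...,λ_d⁻¹)). -/
open MeasureTheory Finset

/-!
Let `p = P(X ≤ λ)`, so that `l(λ⁻¹) = -log p`. Max-stability gives `P(X ≤ s⁻¹ λ) = p ^ s` for
`s > 0`. As `X` is almost surely positive, `max_j F(X_j) ^ λ_j ≤ e^{-s}` holds exactly when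
`X ≤ s⁻¹ λ`, so the maximum has distribution function `u ↦ u ^ c` on `(0, 1)` with `c = -log p`,
and its mean is `∫₀¹ (1 - u ^ c) du = c / (1 + c)`. The identity `p ^ s = e^{-s c}` needs `p > 0`,
which max-stability also provides: `p = P(X ≤ n λ) ^ n`, and `P(X ≤ n λ) > 0` for large `n`.
-/

noncomputable def frechetCDF (x : ℝ) : ℝ := Real.exp (-x⁻¹)

open Filter Topology

theorem frechetCDF_rpow_le_exp_neg_iff {x : ℝ} (hx : 0 < x) (a s : ℝ) :
    frechetCDF x ^ a ≤ Real.exp (-s) ↔ s * x ≤ a := by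
  rw [frechetCDF, ← Real.exp_mul, Real.exp_le_exp, neg_mul, neg_le_neg_iff, le_inv_mul_iff₀ hx,
    mul_comm]

theorem frechetCDF_pos (x : ℝ) : 0 < frechetCDF x := Real.exp_pos _

theorem measurable_frechetCDF : Measurable frechetCDF := by
  unfold frechetCDF; fun_prop

theorem tendsto_frechetCDF_nhdsGT_zero : Tendsto frechetCDF (𝓝[>] 0) (𝓝 0) :=
  Real.tendsto_exp_atBot.comp (tendsto_neg_atTop_atBot.comp tendsto_inv_nhdsGT_zero)

section

variable {Ω : Type*} [MeasurableSpace Ω] {μ : Measure Ω}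

theorem ae_pos_of_measureReal_le_eq_frechetCDF [IsFiniteMeasure μ] {Y : Ω → ℝ}
    (hY : ∀ t, 0 < t → μ.real {ω | Y ω ≤ t} = frechetCDF t) : ∀ᵐ ω ∂μ, 0 < Y ω := by
  have hle : ∀ᶠ t in 𝓝[>] (0 : ℝ), μ.real {ω | Y ω ≤ 0} ≤ frechetCDF t := by
    filter_upwards [self_mem_nhdsWithin] with t (ht : 0 < t)
    rw [← hY t ht]
    exact measureReal_mono fun ω (hω : Y ω ≤ 0) => hω.trans ht.le
  have h0 : μ.real {ω | Y ω ≤ 0} = 0 :=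
    (ge_of_tendsto tendsto_frechetCDF_nhdsGT_zero hle).antisymm measureReal_nonneg
  rw [measureReal_eq_zero_iff] at h0
  simpa [ae_iff] using h0

theorem exists_nat_measure_forall_le_mul_ne_zero {ι : Type*} [Finite ι] [NeZero μ]
    (X : ι → Ω → ℝ) {a : ι → ℝ} (ha : ∀ j, 0 < a j) :
    ∃ n : ℕ, 0 < n ∧ μ {ω | ∀ j, X j ω ≤ n * a j} ≠ 0 := by
  by_contra! h
  have hcover : ⋃ n : ℕ, {ω | ∀ j, X j ω ≤ (n + 1 : ℕ) * a j} = Set.univ := by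
    refine Set.eq_univ_of_forall fun ω => Set.mem_iUnion.2 ?_
    have hlarge : ∀ᶠ n : ℕ in atTop, ∀ j, X j ω ≤ (n + 1 : ℕ) * a j := by
      refine eventually_all.2 fun j => ?_
      have hj := (tendsto_natCast_atTop_atTop.comp (tendsto_add_atTop_nat 1)).atTop_mul_const (ha j)
      exact hj.eventually_ge_atTop (X j ω)
    exact hlarge.exists
  have hnull := measure_iUnion_null fun n : ℕ => h (n + 1) n.succ_pos
  rw [hcover, Measure.measure_univ_eq_zero] at hnull
  exact NeZero.ne μ hnull

theorem integral_eq_div_of_measureReal_le_eq_rpow [IsProbabilityMeasure μ] {Y : Ω → ℝ} {c : ℝ}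
    (hY : Measurable Y) (hY0 : 0 ≤ᵐ[μ] Y) (hY1 : ∀ᵐ ω ∂μ, Y ω ≤ 1) (hc : 0 ≤ c)
    (hcdf : ∀ u ∈ Set.Ioo 0 1, μ.real {ω | Y ω ≤ u} = u ^ c) :
    ∫ ω, Y ω ∂μ = c / (1 + c) := by
  have hint : Integrable Y μ := .of_bound hY.aestronglyMeasurable 1 <| by
    filter_upwards [hY0, hY1] with ω h0 h1
    rwa [Real.norm_of_nonneg h0]
  have hzero : ∀ u, 1 ≤ u → μ.real {ω | u < Y ω} = 0 := fun u hu => by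
    rw [measureReal_eq_zero_iff]
    exact measure_mono_null (fun ω (h : u < Y ω) => not_le.2 (hu.trans_lt h)) (ae_iff.1 hY1)
  have htail : Set.EqOn (fun u => μ.real {ω | u < Y ω}) (fun u => 1 - u ^ c) (Set.Ioc 0 1) := by
    intro u ⟨hu0, hu1⟩
    rcases hu1.lt_or_eq with hu1 | rfl
    · have hcompl : {ω | u < Y ω} = {ω | Y ω ≤ u}ᶜ := by ext; simp
      dsimp only
      rw [hcompl, probReal_compl_eq_one_sub (measurableSet_le hY measurable_const),
        hcdf u ⟨hu0, hu1⟩]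
    · simp [hzero 1 le_rfl]
  have hc' : -1 < c := by linarith
  calc ∫ ω, Y ω ∂μ = ∫ u in Set.Ioi 0, μ.real {ω | u < Y ω} := hint.integral_eq_integral_meas_lt hY0
    _ = ∫ u in Set.Ioc 0 1, μ.real {ω | u < Y ω} :=
      setIntegral_eq_of_subset_of_forall_sdiff_eq_zero measurableSet_Ioi Set.Ioc_subset_Ioi_self
        fun u hu => hzero u (not_le.1 fun h => hu.2 ⟨hu.1, h⟩).le
    _ = ∫ u in (0)..1, (1 - u ^ c) := by
      rw [setIntegral_congr_fun measurableSet_Ioc htail,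
        intervalIntegral.integral_of_le zero_le_one]
    _ = c / (1 + c) := by
      rw [intervalIntegral.integral_sub intervalIntegrable_const
        (intervalIntegral.intervalIntegrable_rpow' hc'), integral_rpow (.inl hc')]
      simp only [intervalIntegral.integral_const, sub_zero, smul_eq_mul, mul_one, Real.one_rpow,
        Real.zero_rpow (by linarith : c + 1 ≠ 0), one_div]
      field_simp
      ring

section

variable {ι : Type*} {X : ι → Ω → ℝ} {a : ι → ℝ}

def IsMaxStable (μ : Measure Ω) (X : ι → Ω → ℝ) : Prop :=
  ∀ t : ℝ, 0 < t → ∀ x : ι → ℝ, (∀ j, 0 < x j) →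
    μ.real {ω | ∀ j, X j ω ≤ t * x j} ^ t = μ.real {ω | ∀ j, X j ω ≤ x j}

theorem measureReal_forall_le_inv_mul_eq_rpow
    (hms : IsMaxStable μ X) (ha : ∀ j, 0 < a j) {s : ℝ} (hs : 0 < s) :
    μ.real {ω | ∀ j, X j ω ≤ s⁻¹ * a j} = μ.real {ω | ∀ j, X j ω ≤ a j} ^ s :=
  (Real.rpow_inv_eq measureReal_nonneg measureReal_nonneg hs.ne').1 (hms s⁻¹ (inv_pos.2 hs) a ha)

theorem measureReal_forall_le_pos [Finite ι] [IsFiniteMeasure μ] [NeZero μ]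
    (hms : IsMaxStable μ X) (ha : ∀ j, 0 < a j) : 0 < μ.real {ω | ∀ j, X j ω ≤ a j} := by
  obtain ⟨n, hn, hμn⟩ := exists_nat_measure_forall_le_mul_ne_zero (μ := μ) X ha
  rw [← hms n (Nat.cast_pos.2 hn) a ha]
  exact Real.rpow_pos_of_pos (ENNReal.toReal_pos hμn (measure_ne_top μ _)) _

variable [Fintype ι] (hne : (univ : Finset ι).Nonempty)

theorem measureReal_sup'_frechetCDF_rpow_le [IsFiniteMeasure μ] [NeZero μ]
    (hX : ∀ᵐ ω ∂μ, ∀ j, 0 < X j ω) (hms : IsMaxStable μ X)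
    (ha : ∀ j, 0 < a j) {u : ℝ} (hu : u ∈ Set.Ioo 0 1) :
    μ.real {ω | univ.sup' hne (fun j => frechetCDF (X j ω) ^ a j) ≤ u}
      = u ^ (-Real.log (μ.real {ω | ∀ j, X j ω ≤ a j})) := by
  set s := -Real.log u
  have hs : 0 < s := neg_pos.2 (Real.log_neg hu.1 hu.2)
  have hu : u = Real.exp (-s) := by simp [s, Real.exp_log hu.1]
  have hset : {ω | univ.sup' hne (fun j => frechetCDF (X j ω) ^ a j) ≤ u}
      =ᵐ[μ] {ω | ∀ j, X j ω ≤ s⁻¹ * a j} := by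
    refine eventuallyEq_set.2 ?_
    filter_upwards [hX] with ω hω
    simp only [hu, sup'_le_iff, mem_univ, true_implies,
      frechetCDF_rpow_le_exp_neg_iff (hω _), le_inv_mul_iff₀ hs]
  rw [measureReal_congr hset, measureReal_forall_le_inv_mul_eq_rpow hms ha hs, hu,
    Real.rpow_def_of_pos (measureReal_forall_le_pos hms ha), ← Real.exp_mul]
  ring_nf

theorem measurable_sup'_frechetCDF_rpow (hX : ∀ j, Measurable (X j)) :
    Measurable fun ω => univ.sup' hne fun j => frechetCDF (X j ω) ^ a j := by
  convert Finset.measurable_sup' hne fun j _ => (measurable_frechetCDF.comp (hX j)).pow_const (a j)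
  simp [Finset.sup'_apply]

theorem sup'_frechetCDF_rpow_le_one {x : ι → ℝ} (hx : ∀ j, 0 < x j) (ha : ∀ j, 0 ≤ a j) :
    univ.sup' hne (fun j => frechetCDF (x j) ^ a j) ≤ 1 :=
  (sup'_le_iff hne _).2 fun j _ => by
    simpa using (frechetCDF_rpow_le_exp_neg_iff (hx j) (a j) 0).2 (by simpa using ha j)

theorem sup'_frechetCDF_rpow_nonneg (x : ι → ℝ) :
    0 ≤ univ.sup' hne (fun j => frechetCDF (x j) ^ a j) :=
  le_sup'_of_le _ hne.choose_spec (Real.rpow_nonneg (frechetCDF_pos _).le _)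

end

end

/-- E[max_j F(X_j)^{λ_j}] = l(λ⁻¹)/(1 + l(λ⁻¹)). -/
theorem stmt2
    {Ω : Type*} [MeasurableSpace Ω] (μ : Measure Ω) [IsProbabilityMeasure μ]
    {d : ℕ} (hd : 0 < d) (X : Fin d → Ω → ℝ) (hXm : ∀ j, Measurable (X j))
    (hmarg : ∀ j, ∀ t : ℝ, 0 < t → (μ {ω | X j ω ≤ t}).toReal = frechetCDF t)
    (hms : ∀ t : ℝ, 0 < t → ∀ x : Fin d → ℝ, (∀ j, 0 < x j) →
      ((μ {ω | ∀ j, X j ω ≤ t * x j}).toReal) ^ t = (μ {ω | ∀ j, X j ω ≤ x j}).toReal)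
    (l : (Fin d → ℝ) → ℝ)
    (hl : ∀ x : Fin d → ℝ, (∀ j, 0 ≤ x j) →
      l x = - Real.log ((μ {ω | ∀ j, 0 < x j → X j ω ≤ (x j)⁻¹}).toReal))
    (lam : Fin d → ℝ) (hlam : ∀ j, 0 < lam j) :
    ∫ ω, Finset.univ.sup' ⟨⟨0, hd⟩, Finset.mem_univ _⟩
        (fun j => frechetCDF (X j ω) ^ lam j) ∂μ
      = (l fun j => (lam j)⁻¹) / (1 + (l fun j => (lam j)⁻¹)) := by
  have hX : ∀ᵐ ω ∂μ, ∀ j, 0 < X j ω :=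
    ae_all_iff.2 fun j => ae_pos_of_measureReal_le_eq_frechetCDF (hmarg j)
  have hc : l (fun j => (lam j)⁻¹) = -Real.log (μ.real {ω | ∀ j, X j ω ≤ lam j}) := by
    simp only [hl _ fun j => (inv_pos.2 (hlam j)).le, inv_pos, hlam, inv_inv, true_implies]
    rfl
  rw [hc]
  refine integral_eq_div_of_measureReal_le_eq_rpow (measurable_sup'_frechetCDF_rpow _ hXm)
    (.of_forall fun ω => sup'_frechetCDF_rpow_nonneg _ _) ?_ ?_
    fun u hu => measureReal_sup'_frechetCDF_rpow_le _ hX hms hlam hu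
  · filter_upwards [hX] with ω hω
    exact sup'_frechetCDF_rpow_le_one _ hω fun j => (hlam j).le
  · exact neg_nonneg.2 (Real.log_nonpos measureReal_nonneg measureReal_le_one)
end

section
/- If the random variables M₁,...,M_p are associated, then for all x₁,...,x_p: (i) min_j P(M_j > x_j) ≥ P(∩_j {M_j > x_j}) ≥ Π_j P(M_j > x_j), and (ii) min_j P(M_j ≤ x_j) ≥ P(∩_j {M_j ≤ x_j}) ≥ Π_j P(M_j ≤ x_j). -/
/-!
Indicators of upper sets are monotone, so association gives `P(A ∩ B) ≥ P(A) P(B)` for upper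
sets `A`, `B` of `ℝᵖ` pulled back along `M`; induction over the coordinates turns this into the
product bound for the upper orthant. The lower orthant follows by applying the same bound to
`-M`, which is again associated. The bounds by the minimum are monotonicity of the measure.
-/

open MeasureTheory Finset

/-- Random variables M₁,...,M_p (as a random vector) are associated if every pair of
coordinatewise nondecreasing functionals with existing covariance is nonnegatively
correlated (Esary–Proschan–Walkup). -/
def AssociatedRV {Ω : Type*} [MeasurableSpace Ω] (μ : MeasureTheory.Measure Ω)
    {p : ℕ} (M : Fin p → Ω → ℝ) : Prop :=
  ∀ f g : (Fin p → ℝ) → ℝ, Monotone f → Monotone g →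
    MeasureTheory.Integrable (fun ω => f (fun j => M j ω)) μ →
    MeasureTheory.Integrable (fun ω => g (fun j => M j ω)) μ →
    MeasureTheory.Integrable (fun ω => f (fun j => M j ω) * g (fun j => M j ω)) μ →
    (∫ ω, f (fun j => M j ω) ∂μ) * (∫ ω, g (fun j => M j ω) ∂μ)
      ≤ ∫ ω, f (fun j => M j ω) * g (fun j => M j ω) ∂μ

open scoped Pointwise

theorem IsUpperSet.monotone_indicator_one {α R : Type*} [Preorder α] [Zero R] [One R]
    [Preorder R] [ZeroLEOneClass R] {s : Set α} (hs : IsUpperSet s) :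
    Monotone (s.indicator (1 : α → R)) := by
  intro v w hvw
  by_cases hv : v ∈ s
  · simp [hv, hs hvw hv]
  · simp only [Set.indicator_of_notMem hv]
    exact Set.indicator_nonneg (fun _ _ => zero_le_one) w

namespace AssociatedRV

variable {Ω : Type*} [MeasurableSpace Ω] {μ : Measure Ω} {p : ℕ} {M : Fin p → Ω → ℝ}

theorem neg (h : AssociatedRV μ M) : AssociatedRV μ (-M) := by
  intro f g hf hg hfi hgi hfgi
  have key := h (fun v => -f (-v)) (fun v => -g (-v))
    (fun v w hvw => neg_le_neg (hf (neg_le_neg hvw)))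
    (fun v w hvw => neg_le_neg (hg (neg_le_neg hvw))) hfi.neg hgi.neg
    (by simp only [neg_mul_neg]; exact hfgi)
  simp only [integral_neg, neg_mul_neg] at key
  exact key

theorem measureReal_mul_le_inter [IsFiniteMeasure μ] (h : AssociatedRV μ M)
    (hM : ∀ j, Measurable (M j)) {A B : Set (Fin p → ℝ)} (hA : IsUpperSet A)
    (hB : IsUpperSet B) (hAm : MeasurableSet A) (hBm : MeasurableSet B) :
    μ.real ((fun ω j => M j ω) ⁻¹' A) * μ.real ((fun ω j => M j ω) ⁻¹' B)
      ≤ μ.real ((fun ω j => M j ω) ⁻¹' (A ∩ B)) := by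
  set X : Ω → Fin p → ℝ := fun ω j => M j ω
  have hX : Measurable X := measurable_pi_lambda _ hM
  have hcomp : ∀ C : Set (Fin p → ℝ),
      (fun ω => C.indicator (1 : (Fin p → ℝ) → ℝ) (X ω)) = (X ⁻¹' C).indicator 1 := fun _ => rfl
  have hprod : (fun ω => A.indicator (1 : (Fin p → ℝ) → ℝ) (X ω) * B.indicator 1 (X ω))
      = (X ⁻¹' (A ∩ B)).indicator 1 := by
    rw [Set.preimage_inter, Set.inter_indicator_one]; rfl
  have hint : ∀ {C : Set (Fin p → ℝ)}, MeasurableSet C →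
      Integrable ((X ⁻¹' C).indicator (1 : Ω → ℝ)) μ := fun hC =>
    (integrable_const (1 : ℝ)).indicator (hX hC)
  have key := h _ _ hA.monotone_indicator_one hB.monotone_indicator_one (hint hAm) (hint hBm)
    (hprod ▸ hint (hAm.inter hBm))
  rwa [hcomp, hcomp, hprod, integral_indicator_one (hX hAm), integral_indicator_one (hX hBm),
    integral_indicator_one (hX (hAm.inter hBm))] at key

theorem prod_measureReal_le_biInter [IsProbabilityMeasure μ] (h : AssociatedRV μ M)
    (hM : ∀ j, Measurable (M j)) {ι : Type*} {U : ι → Set (Fin p → ℝ)}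
    (hU : ∀ i, IsUpperSet (U i)) (hUm : ∀ i, MeasurableSet (U i)) (s : Finset ι) :
    ∏ i ∈ s, μ.real ((fun ω j => M j ω) ⁻¹' U i)
      ≤ μ.real ((fun ω j => M j ω) ⁻¹' ⋂ i ∈ s, U i) := by
  classical
  induction s using Finset.induction_on with
  | empty => simp
  | insert a s ha ih =>
    rw [prod_insert ha, set_biInter_insert]
    calc _ ≤ μ.real ((fun ω j => M j ω) ⁻¹' U a)
            * μ.real ((fun ω j => M j ω) ⁻¹' ⋂ i ∈ s, U i) :=
          mul_le_mul_of_nonneg_left ih measureReal_nonneg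
      _ ≤ _ := h.measureReal_mul_le_inter hM (hU a) (isUpperSet_iInter₂ fun i _ => hU i) (hUm a)
          (s.measurableSet_biInter fun i _ => hUm i)

theorem prod_measureReal_le_biInter_of_isLowerSet [IsProbabilityMeasure μ]
    (h : AssociatedRV μ M)
    (hM : ∀ j, Measurable (M j)) {ι : Type*} {L : ι → Set (Fin p → ℝ)}
    (hL : ∀ i, IsLowerSet (L i)) (hLm : ∀ i, MeasurableSet (L i)) (s : Finset ι) :
    ∏ i ∈ s, μ.real ((fun ω j => M j ω) ⁻¹' L i)
      ≤ μ.real ((fun ω j => M j ω) ⁻¹' ⋂ i ∈ s, L i) := by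
  have := h.neg.prod_measureReal_le_biInter (fun j => (hM j).neg) (U := fun i => -L i)
    (fun i => (hL i).neg) (fun i => measurable_neg (hLm i)) s
  have hpre : ∀ S : Set (Fin p → ℝ),
      (fun ω j => (-M) j ω) ⁻¹' (-S) = (fun ω j => M j ω) ⁻¹' S := fun S => by
    ext ω
    simp [Pi.neg_def]
  simpa only [hpre, Set.preimage_iInter₂, Set.iInter_neg] using this

end AssociatedRV

/-- Associated random variables satisfy the positive upper and lower orthant
dependence bounds. -/
theorem stmt12
    {Ω : Type*} [MeasurableSpace Ω] (μ : Measure Ω) [IsProbabilityMeasure μ]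
    {p : ℕ} (hp : 0 < p) (M : Fin p → Ω → ℝ) (hMm : ∀ j, Measurable (M j))
    (hassoc : AssociatedRV μ M) (x : Fin p → ℝ) :
    ((μ {ω | ∀ j, x j < M j ω}).toReal
        ≤ Finset.univ.inf' ⟨⟨0, hp⟩, Finset.mem_univ _⟩
            (fun j => (μ {ω | x j < M j ω}).toReal) ∧
      ∏ j, (μ {ω | x j < M j ω}).toReal ≤ (μ {ω | ∀ j, x j < M j ω}).toReal) ∧
    ((μ {ω | ∀ j, M j ω ≤ x j}).toReal
        ≤ Finset.univ.inf' ⟨⟨0, hp⟩, Finset.mem_univ _⟩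
            (fun j => (μ {ω | M j ω ≤ x j}).toReal) ∧
      ∏ j, (μ {ω | M j ω ≤ x j}).toReal ≤ (μ {ω | ∀ j, M j ω ≤ x j}).toReal) := by
  have hinter_le : ∀ E : Fin p → Set Ω, μ.real {ω | ∀ j, ω ∈ E j}
      ≤ univ.inf' ⟨⟨0, hp⟩, mem_univ _⟩ fun j => μ.real (E j) := fun E =>
    le_inf' _ _ fun j _ => measureReal_mono fun ω hω => hω j
  have hupper := hassoc.prod_measureReal_le_biInter hMm (U := fun j => {v | x j < v j})
    (fun j v w hvw hv => hv.trans_le (hvw j))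
    (fun j => measurableSet_lt measurable_const (measurable_pi_apply j)) univ
  have hlower := hassoc.prod_measureReal_le_biInter_of_isLowerSet hMm
    (L := fun j => {v | v j ≤ x j}) (fun j v w hvw hw => (hvw j).trans hw)
    (fun j => measurableSet_le (measurable_pi_apply j) measurable_const) univ
  simp only [mem_univ, Set.preimage_ofPred_eq, Set.iInter_ofPred,
    true_implies] at hupper hlower
  exact ⟨⟨hinter_le _, hupper⟩, hinter_le _, hlower⟩
end
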